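/- arXiv:2211.12339 — 2 statements merged into one kernel-verified Lean document; each statement's English description precedes it below -/
import Mathlib

section
/- Let Cov be symmetric positive definite and fix i. For all λ ≥ 0, the quadratic value θ*(λ)ᵀ Cov θ*(λ) at any minimizer θ*(λ) of θᵀ Cov θ + λ Σ_{j≠i}|θ_j| subject to θ_i = -1 satisfies det(Cov)/det(Cov_{[n]∖i}^{[n]∖i}) ≤ θ*(λ)ᵀ Cov θ*(λ) ≤ Cov_{ii}. -/
open Matrix Finset

/-! The lower bound is Cauchy–Schwarz for the form `(x, y) ↦ xᵀ Cov y`, tested against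
`y = Cov⁻¹ eᵢ`: it gives `θᵢ² ≤ (Cov⁻¹)ᵢᵢ · θᵀ Cov θ` for every `θ`, and by the adjugate formula
`(Cov⁻¹)ᵢᵢ` is the ratio of the principal minor to `det Cov`. The upper bound compares the
minimizer with the feasible point `-eᵢ`, at which the penalty vanishes. -/

namespace Matrix

variable {ι : Type*} [Fintype ι] [DecidableEq ι]

theorem single_dotProduct_mulVec_single {R : Type*} [CommSemiring R] (A : Matrix ι ι R) (i : ι)
    (c : R) : Pi.single i c ⬝ᵥ A *ᵥ Pi.single i c = c * c * A i i := by
  rw [mulVec_single, single_dotProduct, Pi.smul_apply, col_apply, op_smul_eq_mul]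
  ring

theorem PosDef.dotProduct_sq_le_inv_mul {A : Matrix ι ι ℝ} (hA : A.PosDef) (x v : ι → ℝ) :
    (x ⬝ᵥ v) ^ 2 ≤ (v ⬝ᵥ A⁻¹ *ᵥ v) * (x ⬝ᵥ A *ᵥ x) := by
  have hunit : IsUnit A.det := hA.det_pos.ne'.isUnit
  set y := A⁻¹ *ᵥ v
  have hAy : A *ᵥ y = v := by rw [mulVec_mulVec, mul_nonsing_inv A hunit, one_mulVec]
  have hyA : y ᵥ* A = v := by
    rw [← hAy, ← vecMul_transpose, show Aᵀ = A from hA.isHermitian]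
  have hCS := LinearMap.BilinForm.apply_mul_apply_le_of_forall_zero_le (toLinearMap₂' ℝ A)
    (fun z ↦ by simpa [toLinearMap₂'_apply'] using hA.posSemidef.dotProduct_mulVec_nonneg z) x y
  simp only [toLinearMap₂'_apply', hAy, dotProduct_mulVec y, hyA] at hCS
  rw [dotProduct_comm v x, ← sq, dotProduct_comm y v, mul_comm] at hCS
  exact hCS

theorem inv_apply_self_eq_det_submatrix_div {K : Type*} [Field K] {n : ℕ}
    (A : Matrix (Fin (n + 1)) (Fin (n + 1)) K) (i : Fin (n + 1)) :
    A⁻¹ i i = (A.submatrix i.succAbove i.succAbove).det / A.det := by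
  rw [inv_def, smul_apply, adjugate_fin_succ_eq_det_submatrix, ← two_mul, pow_mul, neg_one_sq,
    one_pow, one_mul, Ring.inverse_eq_inv', smul_eq_mul, div_eq_inv_mul]

theorem PosDef.sq_mul_det_div_det_submatrix_le {n : ℕ}
    {A : Matrix (Fin (n + 1)) (Fin (n + 1)) ℝ} (hA : A.PosDef) (x : Fin (n + 1) → ℝ)
    (i : Fin (n + 1)) :
    x i ^ 2 * (A.det / (A.submatrix i.succAbove i.succAbove).det) ≤ x ⬝ᵥ A *ᵥ x := by
  have hCS := hA.dotProduct_sq_le_inv_mul x (Pi.single i 1)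
  simp only [dotProduct_single, mul_one, single_dotProduct, one_mul, mulVec_single_one,
    col_apply] at hCS
  have hpos : 0 < A⁻¹ i i := hA.inv.diag_pos
  rw [← inv_div, ← inv_apply_self_eq_det_submatrix_div, ← div_eq_mul_inv, div_le_iff₀ hpos]
  linarith

end Matrix

/-- For any minimizer `θ*` of `θᵀ Cov θ + λ ∑_{j≠i} |θ_j|` subject to
`θ i = -1` (λ ≥ 0), the quadratic value satisfies
`det Cov / det(Cov minus row/col i) ≤ θ*ᵀ Cov θ* ≤ Cov i i`. -/
theorem stmt_4 {n : ℕ} (Cov : Matrix (Fin (n + 1)) (Fin (n + 1)) ℝ) (hCov : Cov.PosDef)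
    (i : Fin (n + 1)) (lam : ℝ) (hlam : 0 ≤ lam)
    (θstar : Fin (n + 1) → ℝ) (hθi : θstar i = -1)
    (hmin : ∀ θ : Fin (n + 1) → ℝ, θ i = -1 →
      θstar ⬝ᵥ Cov.mulVec θstar + lam * ∑ j ∈ Finset.univ.erase i, |θstar j| ≤
        θ ⬝ᵥ Cov.mulVec θ + lam * ∑ j ∈ Finset.univ.erase i, |θ j|) :
    Cov.det / (Cov.submatrix i.succAbove i.succAbove).det ≤ θstar ⬝ᵥ Cov.mulVec θstar ∧
      θstar ⬝ᵥ Cov.mulVec θstar ≤ Cov i i := by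
  refine ⟨by simpa [hθi] using hCov.sq_mul_det_div_det_submatrix_le θstar i, ?_⟩
  have hpen : 0 ≤ lam * ∑ j ∈ Finset.univ.erase i, |θstar j| :=
    mul_nonneg hlam (Finset.sum_nonneg fun j _ ↦ abs_nonneg _)
  have hpen_single : ∑ j ∈ Finset.univ.erase i, |(Pi.single i (-1) : Fin (n + 1) → ℝ) j| = 0 :=
    Finset.sum_eq_zero fun j hj ↦ by simp [Pi.single_eq_of_ne (Finset.ne_of_mem_erase hj)]
  have hcmp := hmin (Pi.single i (-1)) (by simp)
  rw [single_dotProduct_mulVec_single, hpen_single] at hcmp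
  linarith
end

section
/- Let Ĉov be symmetric positive definite, b̂ ∈ ℝ^{n-1}, λ_max = 2‖b̂‖_∞ > 0, A the symmetric positive definite square root of Ĉov, and 0 < λ < λ_max. Let θ̂*(λ) minimize θ̂ᵀ Ĉov θ̂ - 2b̂ᵀθ̂ + λ‖θ̂‖₁. If |b̂_j|/‖b̂‖_∞ < 1 - 2‖A_j‖₂‖A⁻¹b̂‖₂·|1/λ - 1/(2‖b̂‖_∞)|, then θ̂*(λ)_j = 0. -/
open Matrix Finset

/-!
Write `v = A θ*` and `c = A⁻¹ b̂`, so that `θ*ᵀ Ĉov θ* = ‖v‖²` and `b̂ᵀθ* = ⟪c, v⟫`. Minimality of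
`θ*` along the ray `t ↦ t θ*` gives `2 ‖v‖² - 2 ⟪c, v⟫ + λ ‖θ*‖₁ = 0`; together with
`b̂ᵀθ* ≤ ‖b̂‖_∞ ‖θ*‖₁` this yields `‖v‖² ≤ s ⟪c, v⟫` for `s = 1 - λ / (2 ‖b̂‖_∞)`, hence
`‖v - s c‖ ≤ |s| ‖c‖`. The gradient coordinate `(Ĉov θ*)_j - b̂_j = ⟪A_j, v - s c⟫ - (1 - s) b̂_j` is
therefore less than `λ / 2` in absolute value under the screening hypothesis, and first-order
optimality in the coordinate `j` forces `θ*_j = 0`.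
-/

variable {ι : Type*} [Fintype ι]

lemma Matrix.IsSymm.dotProduct_mulVec_comm {C : Matrix ι ι ℝ} (hC : C.IsSymm) (x y : ι → ℝ) :
    x ⬝ᵥ C *ᵥ y = y ⬝ᵥ C *ᵥ x := by
  rw [dotProduct_mulVec, ← mulVec_transpose, hC.eq, dotProduct_comm]

lemma Matrix.IsSymm.add_dotProduct_mulVec_add {C : Matrix ι ι ℝ} (hC : C.IsSymm)
    (x y : ι → ℝ) :
    (x + y) ⬝ᵥ C *ᵥ (x + y) = x ⬝ᵥ C *ᵥ x + 2 * (y ⬝ᵥ C *ᵥ x) + y ⬝ᵥ C *ᵥ y := by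
  rw [mulVec_add, dotProduct_add, add_dotProduct, add_dotProduct, hC.dotProduct_mulVec_comm x y]
  ring

lemma dotProduct_le_norm_mul_sum_abs (b θ : ι → ℝ) : b ⬝ᵥ θ ≤ ‖b‖ * ∑ k, |θ k| := by
  rw [dotProduct, mul_sum]
  refine sum_le_sum fun k _ => ?_
  calc b k * θ k ≤ |b k| * |θ k| := by rw [← abs_mul]; exact le_abs_self _
    _ ≤ ‖b‖ * |θ k| := mul_le_mul_of_nonneg_right (norm_le_pi_norm b k) (abs_nonneg _)

lemma abs_sum_mul_le_sqrt_mul_sqrt (f g : ι → ℝ) :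
    |∑ k, f k * g k| ≤ √(∑ k, f k ^ 2) * √(∑ k, g k ^ 2) := by
  refine abs_le.2 ⟨?_, Real.sum_mul_le_sqrt_mul_sqrt _ f g⟩
  simpa [neg_le, ← sum_neg_distrib] using Real.sum_mul_le_sqrt_mul_sqrt univ (-f) g

lemma sqrt_sum_sub_mul_sq_le {v c : ι → ℝ} {s : ℝ}
    (h : ∑ k, v k ^ 2 ≤ s * ∑ k, c k * v k) :
    √(∑ k, (v k - s * c k) ^ 2) ≤ |s| * √(∑ k, c k ^ 2) := by
  have hexp : ∑ k, (v k - s * c k) ^ 2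
      = ∑ k, v k ^ 2 - 2 * s * ∑ k, c k * v k + s ^ 2 * ∑ k, c k ^ 2 := by
    simp only [mul_sum, ← sum_sub_distrib, ← sum_add_distrib]
    exact sum_congr rfl fun k _ => by ring
  have hv : 0 ≤ ∑ k, v k ^ 2 := sum_nonneg fun k _ => sq_nonneg _
  rw [← Real.sqrt_sq_eq_abs, ← Real.sqrt_mul (sq_nonneg s)]
  exact Real.sqrt_le_sqrt (by rw [hexp]; nlinarith)

def lassoObjective (C : Matrix ι ι ℝ) (b : ι → ℝ) (lam : ℝ) (θ : ι → ℝ) : ℝ :=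
  θ ⬝ᵥ C *ᵥ θ - 2 * (b ⬝ᵥ θ) + lam * ∑ k, |θ k|

section lasso

variable {C : Matrix ι ι ℝ} {b : ι → ℝ} {lam : ℝ} {θ : ι → ℝ}

lemma lassoObjective_smul {t : ℝ} (ht : 0 ≤ t) :
    lassoObjective C b lam (t • θ)
      = t ^ 2 * (θ ⬝ᵥ C *ᵥ θ) + t * (lam * ∑ k, |θ k| - 2 * (b ⬝ᵥ θ)) := by
  simp only [lassoObjective, mulVec_smul, dotProduct_smul, smul_dotProduct, Pi.smul_apply,
    smul_eq_mul, abs_mul, abs_of_nonneg ht, ← mul_sum]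
  ring

lemma lassoObjective_add_single [DecidableEq ι] (hC : C.IsSymm) (j : ι) (t : ℝ) :
    lassoObjective C b lam (θ + Pi.single j t)
      = lassoObjective C b lam θ + 2 * t * ((C *ᵥ θ) j - b j) + t ^ 2 * C j j
        + lam * (|θ j + t| - |θ j|) := by
  have habs : ∑ k, |(θ + Pi.single j t : ι → ℝ) k| = ∑ k, |θ k| + (|θ j + t| - |θ j|) := by
    rw [← sub_eq_iff_eq_add', ← sum_sub_distrib,
      Fintype.sum_eq_single j fun k hk => by simp [Pi.single_eq_of_ne hk]]
    simp
  have hCjj : (C *ᵥ Pi.single j t) j = C j j * t := dotProduct_single _ _ _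
  rw [lassoObjective, lassoObjective, hC.add_dotProduct_mulVec_add, habs, dotProduct_add,
    single_dotProduct, single_dotProduct, dotProduct_single, hCjj]
  ring

/-- Stationarity of `t ↦ lassoObjective C b lam (t • θ)` at its minimum `t = 1`. -/
lemma two_mul_dotProduct_mulVec_sub_add_eq_zero
    (hmin : ∀ θ', lassoObjective C b lam θ ≤ lassoObjective C b lam θ') :
    2 * (θ ⬝ᵥ C *ᵥ θ) - 2 * (b ⬝ᵥ θ) + lam * ∑ k, |θ k| = 0 := by
  set ψ : ℝ → ℝ := fun t => t ^ 2 * (θ ⬝ᵥ C *ᵥ θ) + t * (lam * ∑ k, |θ k| - 2 * (b ⬝ᵥ θ))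
  have hloc : IsLocalMin ψ 1 := by
    refine IsMinOn.isLocalMin (s := Set.Ici 0) (fun t ht => ?_) (Ici_mem_nhds one_pos)
    have := hmin (t • θ)
    rw [← one_smul ℝ θ, lassoObjective_smul zero_le_one, one_smul,
      lassoObjective_smul (Set.mem_Ici.1 ht)] at this
    exact this
  have hderiv : HasDerivAt ψ
      (2 * (θ ⬝ᵥ C *ᵥ θ) + (lam * ∑ k, |θ k| - 2 * (b ⬝ᵥ θ))) 1 :=
    (((hasDerivAt_pow 2 1).mul_const _).add ((hasDerivAt_id 1).mul_const _)).congr_deriv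
      (by norm_num)
  linarith [hloc.hasDerivAt_eq_zero hderiv]

lemma lassoObjective_quadForm_le
    (hmin : ∀ θ', lassoObjective C b lam θ ≤ lassoObjective C b lam θ')
    (hb : 0 < ‖b‖) (hlam : 0 ≤ lam) :
    θ ⬝ᵥ C *ᵥ θ ≤ (1 - lam / (2 * ‖b‖)) * (b ⬝ᵥ θ) := by
  have hHolder : lam / (2 * ‖b‖) * (b ⬝ᵥ θ) ≤ lam / 2 * ∑ k, |θ k| := by
    calc lam / (2 * ‖b‖) * (b ⬝ᵥ θ) ≤ lam / (2 * ‖b‖) * (‖b‖ * ∑ k, |θ k|) := by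
          gcongr; exact dotProduct_le_norm_mul_sum_abs b θ
      _ = lam / 2 * ∑ k, |θ k| := by field_simp
  linarith [two_mul_dotProduct_mulVec_sub_add_eq_zero hmin]

/-- First-order optimality in the coordinate `j`, where `|·|` is differentiable. -/
lemma two_mul_mulVec_sub_add_sign_eq_zero [DecidableEq ι]
    (hmin : ∀ θ', lassoObjective C b lam θ ≤ lassoObjective C b lam θ') (hC : C.IsSymm) {j : ι}
    (hj : θ j ≠ 0) : 2 * ((C *ᵥ θ) j - b j) + lam * SignType.sign (θ j) = 0 := by
  set φ : ℝ → ℝ := fun t => 2 * t * ((C *ᵥ θ) j - b j) + t ^ 2 * C j j + lam * |θ j + t|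
  have hloc : IsLocalMin φ 0 := Filter.Eventually.of_forall fun t => by
    have := hmin (θ + Pi.single j t)
    rw [lassoObjective_add_single hC] at this
    have hφ0 : φ 0 = lam * |θ j| := by simp [φ]
    simp only [hφ0, φ]
    linarith
  have hderiv : HasDerivAt φ (2 * ((C *ᵥ θ) j - b j) + lam * SignType.sign (θ j)) 0 := by
    have habs : HasDerivAt (fun t => |θ j + t|) (SignType.sign (θ j) : ℝ) 0 :=
      HasDerivAt.comp_const_add (θ j) 0 (by simpa using hasDerivAt_abs hj)
    have hlin :
        HasDerivAt (fun t : ℝ => 2 * t * ((C *ᵥ θ) j - b j)) (2 * ((C *ᵥ θ) j - b j)) 0 :=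
      ((hasDerivAt_id (0 : ℝ)).const_mul 2).mul_const _ |>.congr_deriv (by simp)
    have hquad : HasDerivAt (fun t : ℝ => t ^ 2 * C j j) 0 0 :=
      (hasDerivAt_pow 2 (0 : ℝ)).mul_const _ |>.congr_deriv (by simp)
    exact ((hlin.add hquad).add (habs.const_mul lam)).congr_deriv (by ring)
  exact hloc.hasDerivAt_eq_zero hderiv

lemma eq_zero_of_abs_mulVec_sub_lt [DecidableEq ι]
    (hmin : ∀ θ', lassoObjective C b lam θ ≤ lassoObjective C b lam θ') (hC : C.IsSymm) {j : ι}
    (h : |(C *ᵥ θ) j - b j| < lam / 2) : θ j = 0 := by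
  by_contra hj
  have hopt := two_mul_mulVec_sub_add_sign_eq_zero hmin hC hj
  rcases lt_or_gt_of_ne hj with hneg | hpos
  · norm_num [sign_neg hneg] at hopt
    linarith [le_abs_self ((C *ᵥ θ) j - b j)]
  · norm_num [sign_pos hpos] at hopt
    linarith [neg_abs_le ((C *ᵥ θ) j - b j)]

end lasso

lemma screening_margin {β lam x y z : ℝ} (hβ : 0 < β) (hlam : 0 < lam)
    (h : x / β < 1 - 2 * y * z * |1 / lam - 1 / (2 * β)|) :
    y * (|1 - lam / (2 * β)| * z) + lam / (2 * β) * x < lam / 2 := by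
  have hscale : |1 - lam / (2 * β)| = lam * |1 / lam - 1 / (2 * β)| := by
    rw [← abs_of_pos hlam, ← abs_mul, abs_of_pos hlam]
    congr 1
    field_simp
  rw [div_lt_iff₀ hβ] at h
  rw [hscale]
  have := mul_lt_mul_of_pos_left h (div_pos hlam (mul_pos two_pos hβ))
  field_simp at this ⊢
  linarith

theorem stmt_11_general {m : ℕ} (A Cov : Matrix (Fin m) (Fin m) ℝ)
    (hA : A.PosDef) (hACov : Cov = A * A)
    (b : Fin m → ℝ) (hb : 0 < 2 * ‖b‖)
    (lam : ℝ) (hlam : 0 < lam)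
    (θstar : Fin m → ℝ)
    (hmin : ∀ θ : Fin m → ℝ,
      θstar ⬝ᵥ Cov.mulVec θstar - 2 * (b ⬝ᵥ θstar) + lam * ∑ j, |θstar j| ≤
        θ ⬝ᵥ Cov.mulVec θ - 2 * (b ⬝ᵥ θ) + lam * ∑ j, |θ j|)
    (j : Fin m)
    (hscreen : |b j| / ‖b‖ <
      1 - 2 * Real.sqrt (∑ k, (A j k) ^ 2) * Real.sqrt (∑ k, (A⁻¹.mulVec b k) ^ 2) *
        |1 / lam - 1 / (2 * ‖b‖)|) :
    θstar j = 0 := by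
  have hAsymm : A.IsSymm := isHermitian_iff_isSymm.1 hA.1
  have hCovsymm : Cov.IsSymm := by rw [hACov, IsSymm, transpose_mul, hAsymm.eq]
  set c := A⁻¹ *ᵥ b
  set v := A *ᵥ θstar
  set s := 1 - lam / (2 * ‖b‖)
  have hAc : A *ᵥ c = b := by
    rw [mulVec_mulVec, mul_nonsing_inv A hA.det_pos.ne'.isUnit, one_mulVec]
  have hquad : θstar ⬝ᵥ Cov *ᵥ θstar = ∑ k, v k ^ 2 := by
    rw [hACov, ← mulVec_mulVec, hAsymm.dotProduct_mulVec_comm]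
    simp only [dotProduct, sq, v]
  have hlin : b ⬝ᵥ θstar = ∑ k, c k * v k := by
    rw [dotProduct_comm, ← hAc, hAsymm.dotProduct_mulVec_comm]
    rfl
  have hball := sqrt_sum_sub_mul_sq_le
    (hquad ▸ hlin ▸ lassoObjective_quadForm_le hmin (by linarith) hlam.le)
  have hgrad : (Cov *ᵥ θstar) j - b j
      = ∑ k, A j k * (v k - s * c k) - lam / (2 * ‖b‖) * b j := by
    have hCovj : (Cov *ᵥ θstar) j = ∑ k, A j k * v k := by rw [hACov, ← mulVec_mulVec]; rfl
    have hbj : b j = ∑ k, A j k * c k := by rw [← hAc]; rfl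
    rw [hCovj, hbj]
    simp only [mul_sub, sum_sub_distrib, mul_left_comm (A j _) s, ← mul_sum, s]
    ring
  apply eq_zero_of_abs_mulVec_sub_lt hmin hCovsymm
  calc |(Cov *ᵥ θstar) j - b j|
      ≤ |∑ k, A j k * (v k - s * c k)| + lam / (2 * ‖b‖) * |b j| := by
        rw [hgrad]
        refine (abs_sub _ _).trans_eq ?_
        rw [abs_mul, abs_of_pos (by positivity : 0 < lam / (2 * ‖b‖))]
    _ ≤ √(∑ k, A j k ^ 2) * (|s| * √(∑ k, c k ^ 2)) + lam / (2 * ‖b‖) * |b j| := by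
        gcongr
        exact (abs_sum_mul_le_sqrt_mul_sqrt _ _).trans
          (mul_le_mul_of_nonneg_left hball (Real.sqrt_nonneg _))
    _ < lam / 2 := screening_margin (by linarith) hlam hscreen

/-- Sparsity screening rule (Theorem 3 of the paper). With
`λ_max = 2‖b̂‖_∞ > 0`, `A` the symmetric positive definite square root of `Ĉov`,
`0 < λ < λ_max`, and `θ̂*(λ)` the Lasso minimizer, if
`|b̂_j|/‖b̂‖_∞ < 1 - 2‖A_j‖₂‖A⁻¹b̂‖₂ |1/λ - 1/(2‖b̂‖_∞)|` then `θ̂*(λ)_j = 0`.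
(The norm `‖b‖` on `Fin m → ℝ` is the sup norm.) -/
theorem stmt_11 {m : ℕ} (A Cov : Matrix (Fin m) (Fin m) ℝ)
    (hA : A.PosDef) (hACov : Cov = A * A) (hCov : Cov.PosDef)
    (b : Fin m → ℝ) (hb : 0 < 2 * ‖b‖)
    (lam : ℝ) (hlam : 0 < lam) (hlam' : lam < 2 * ‖b‖)
    (θstar : Fin m → ℝ)
    (hmin : ∀ θ : Fin m → ℝ,
      θstar ⬝ᵥ Cov.mulVec θstar - 2 * (b ⬝ᵥ θstar) + lam * ∑ j, |θstar j| ≤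
        θ ⬝ᵥ Cov.mulVec θ - 2 * (b ⬝ᵥ θ) + lam * ∑ j, |θ j|)
    (j : Fin m)
    (hscreen : |b j| / ‖b‖ <
      1 - 2 * Real.sqrt (∑ k, (A j k) ^ 2) * Real.sqrt (∑ k, (A⁻¹.mulVec b k) ^ 2) *
        |1 / lam - 1 / (2 * ‖b‖)|) :
    θstar j = 0 :=
  stmt_11_general A Cov hA hACov b hb lam hlam θstar hmin j hscreen
end
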